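/- arXiv:1212.6518 — 2 statements merged into one kernel-verified Lean document; each statement's English description precedes it below -/
import Mathlib

section
/- Let F : ℝ² → ℝ² be the polynomial mapping F(x,y) = (x, x²y(y+2)). Then the asymptotic set of F is S_F = {(α,β) ∈ ℝ² : α = 0 and β ≥ 0}, i.e. the closed half-line {0} × [0,∞). -/
open Filter Topology

/-- The asymptotic set (Jelonek set) of a map `F : ℝ² → ℝ²`: the set of points
`y` such that some sequence `x_k` with `‖x_k‖ → ∞` satisfies `F (x_k) → y`. -/
def asymptoticSet (F : ℝ × ℝ → ℝ × ℝ) : Set (ℝ × ℝ) :=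
  {y | ∃ x : ℕ → ℝ × ℝ,
    Tendsto (fun k => ‖x k‖) atTop atTop ∧ Tendsto (fun k => F (x k)) atTop (nhds y)}

/-!
Along a sequence `(x_k, y_k)` escaping to infinity whose image converges, `x_k` converges, so
`|y_k| → ∞` and `y_k (y_k + 2) → ∞`; the bounded second coordinate `x_k² y_k (y_k + 2)` then forces
`x_k → 0`, and the lower bound `x² y (y + 2) ≥ -x²` gives a nonnegative limit. Conversely every
`(0, β)` with `β ≥ 0` is reached along `y_k = k + 1`, `x_k = √(β / (y_k (y_k + 2)))`, where the
second coordinate is constantly `β`.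
-/

def jelonekExample (p : ℝ × ℝ) : ℝ × ℝ := (p.1, p.1 ^ 2 * p.2 * (p.2 + 2))

theorem tendsto_norm_snd_atTop_of_tendsto_fst {ι E F : Type*} [SeminormedAddCommGroup E]
    [SeminormedAddCommGroup F] {l : Filter ι} {p : ι → E × F} {a : E}
    (hp : Tendsto (fun i => ‖p i‖) l atTop) (h₁ : Tendsto (fun i => (p i).1) l (𝓝 a)) :
    Tendsto (fun i => ‖(p i).2‖) l atTop := by
  have hsub : ∀ i, ‖p i‖ + -‖(p i).1‖ ≤ ‖(p i).2‖ := fun i => by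
    have := (Prod.norm_def (p i)).trans_le (max_le_add_of_nonneg (norm_nonneg _) (norm_nonneg _))
    linarith
  exact tendsto_atTop_mono hsub (hp.atTop_add h₁.norm.neg)

theorem tendsto_mul_add_two_atTop_of_tendsto_abs {ι : Type*} {l : Filter ι} {y : ι → ℝ}
    (hy : Tendsto (fun i => |y i|) l atTop) : Tendsto (fun i => y i * (y i + 2)) l atTop := by
  have hle : ∀ i, |y i| * (|y i| + -2) ≤ y i * (y i + 2) := fun i => by
    nlinarith [sq_abs (y i), neg_abs_le (y i)]
  exact tendsto_atTop_mono hle (hy.atTop_mul_atTop₀ (tendsto_atTop_add_const_right _ _ hy))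

theorem neg_sq_le_sq_mul_mul_add_two (x y : ℝ) : -x ^ 2 ≤ x ^ 2 * y * (y + 2) := by
  nlinarith [sq_nonneg (x * (y + 1))]

theorem asymptoticSet_jelonekExample_subset :
    asymptoticSet jelonekExample ⊆ {q : ℝ × ℝ | q.1 = 0 ∧ 0 ≤ q.2} := by
  rintro ⟨α, β⟩ ⟨p, hp, hF⟩
  have hx : Tendsto (fun k => (p k).1) atTop (𝓝 α) := hF.fst_nhds
  have hF₂ : Tendsto (fun k => (p k).1 ^ 2 * (p k).2 * ((p k).2 + 2)) atTop (𝓝 β) := hF.snd_nhds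
  have hyy : Tendsto (fun k => (p k).2 * ((p k).2 + 2)) atTop atTop :=
    tendsto_mul_add_two_atTop_of_tendsto_abs (tendsto_norm_snd_atTop_of_tendsto_fst hp hx)
  have hα : α = 0 := by
    by_contra hα
    have hunbdd := (hx.pow 2).pos_mul_atTop (by positivity) hyy
    simp only [← mul_assoc] at hunbdd
    exact not_tendsto_atTop_of_tendsto_nhds hF₂ hunbdd
  refine ⟨hα, ?_⟩
  have hlow : Tendsto (fun k => -(p k).1 ^ 2) atTop (𝓝 (-α ^ 2)) := (hx.pow 2).neg
  simpa [hα] using le_of_tendsto_of_tendsto' hlow hF₂ fun k => neg_sq_le_sq_mul_mul_add_two _ _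

theorem subset_asymptoticSet_jelonekExample :
    {q : ℝ × ℝ | q.1 = 0 ∧ 0 ≤ q.2} ⊆ asymptoticSet jelonekExample := by
  rintro ⟨α, β⟩ ⟨hα : α = 0, hβ : 0 ≤ β⟩
  subst hα
  set y : ℕ → ℝ := fun k => k + 1
  set x : ℕ → ℝ := fun k => √(β / (y k * (y k + 2)))
  have hy : Tendsto y atTop atTop := tendsto_atTop_add_const_right _ _ tendsto_natCast_atTop_atTop
  have hyy : Tendsto (fun k => y k * (y k + 2)) atTop atTop :=
    hy.atTop_mul_atTop₀ (tendsto_atTop_add_const_right _ _ hy)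
  have hx : Tendsto x atTop (𝓝 0) := by
    simpa using (tendsto_const_nhds.div_atTop hyy).sqrt
  have himage : ∀ k, jelonekExample (x k, y k) = (x k, β) := fun k => by
    have hpos : 0 < y k * (y k + 2) := by positivity
    simp only [jelonekExample, x, Real.sq_sqrt (div_nonneg hβ hpos.le)]
    rw [mul_assoc, div_mul_cancel₀ _ hpos.ne']
  refine ⟨fun k => (x k, y k), ?_, ?_⟩
  · exact tendsto_atTop_mono (fun k => norm_snd_le _) (tendsto_norm_atTop_atTop.comp hy)
  · simpa only [himage] using hx.prodMk_nhds tendsto_const_nhds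

/-- For `F(x,y) = (x, x²y(y+2))`, the asymptotic set is the closed half-line
`{0} × [0, ∞)`. -/
theorem asymptoticSet_example
    (F : ℝ × ℝ → ℝ × ℝ) (hF : ∀ p : ℝ × ℝ, F p = (p.1, p.1 ^ 2 * p.2 * (p.2 + 2))) :
    asymptoticSet F = {q : ℝ × ℝ | q.1 = 0 ∧ 0 ≤ q.2} := by
  obtain rfl : F = jelonekExample := funext hF
  exact asymptoticSet_jelonekExample_subset.antisymm subset_asymptoticSet_jelonekExample
end

section
/- Let F : ℝ² → ℝ² be the polynomial mapping F(x,y) = (x, x²y(y+2)). Then the image under F of the open region U_3 = {(x,y) ∈ ℝ² : x < 0, y > -1} and the image under F of the open region U_4 = {(x,y) ∈ ℝ² : x < 0, y < -1} are equal, and both equal {(α,β) ∈ ℝ² : α < 0 and β > -α²}. -/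
/-! Since `y (y + 2) = (y + 1)² - 1`, the map `y ↦ y (y + 2)` sends each of the half-lines
`y > -1` and `y < -1` onto `(-1, ∞)`. Over a point `x ≠ 0` the second coordinate of `F` is
this map scaled by `x²`, so the fibre over `x` of either image is `(-x², ∞)`. -/

open Set

namespace Real

theorem image_mul_add_two_Ioi : (fun y : ℝ => y * (y + 2)) '' Ioi (-1) = Ioi (-1) := by
  ext t
  simp only [mem_image, mem_Ioi]
  constructor
  · rintro ⟨y, hy, rfl⟩
    nlinarith
  · intro ht
    have hs := sq_sqrt (by linarith : 0 ≤ t + 1)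
    refine ⟨-1 + √(t + 1), by simpa using sqrt_pos.2 (by linarith : 0 < t + 1), ?_⟩
    linear_combination hs

theorem image_mul_add_two_Iio : (fun y : ℝ => y * (y + 2)) '' Iio (-1) = Ioi (-1) := by
  ext t
  simp only [mem_image, mem_Iio, mem_Ioi]
  constructor
  · rintro ⟨y, hy, rfl⟩
    nlinarith
  · intro ht
    have hs := sq_sqrt (by linarith : 0 ≤ t + 1)
    refine ⟨-1 - √(t + 1), by simpa using sqrt_pos.2 (by linarith : 0 < t + 1), ?_⟩
    linear_combination hs

end Real

theorem image_prod_fst_sq_mul_eq {A S : Set ℝ} {g : ℝ → ℝ} {c : ℝ} (hA : (0 : ℝ) ∉ A)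
    (hg : g '' S = Ioi c) :
    (fun p : ℝ × ℝ => (p.1, p.1 ^ 2 * g p.2)) '' (A ×ˢ S) = {q | q.1 ∈ A ∧ c * q.1 ^ 2 < q.2} := by
  ext ⟨a, b⟩
  simp only [mem_image, mem_prod, mem_ofPred_eq, Prod.exists, Prod.mk.injEq]
  constructor
  · rintro ⟨x, y, ⟨hx, hy⟩, rfl, rfl⟩
    have hgy : g y ∈ Ioi c := hg ▸ mem_image_of_mem g hy
    rw [mem_Ioi] at hgy
    have hx2 : 0 < x ^ 2 := pow_two_pos_of_ne_zero (ne_of_mem_of_not_mem hx hA)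
    exact ⟨hx, by nlinarith⟩
  · rintro ⟨ha, hb⟩
    have ha2 : 0 < a ^ 2 := pow_two_pos_of_ne_zero (ne_of_mem_of_not_mem ha hA)
    obtain ⟨y, hy, hgy⟩ : b / a ^ 2 ∈ g '' S := by
      rw [hg, mem_Ioi, lt_div_iff₀ ha2]
      exact hb
    exact ⟨a, y, ⟨ha, hy⟩, rfl, by rw [hgy, mul_div_cancel₀ b ha2.ne']⟩

/-- For `F(x,y) = (x, x²y(y+2))`, the images of the regions
`U₃ = {x < 0, y > -1}` and `U₄ = {x < 0, y < -1}` coincide and equal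
`{(α,β) : α < 0, β > -α²}`. -/
theorem image_regions_example_left
    (F : ℝ × ℝ → ℝ × ℝ) (hF : ∀ p : ℝ × ℝ, F p = (p.1, p.1 ^ 2 * p.2 * (p.2 + 2))) :
    F '' {p : ℝ × ℝ | p.1 < 0 ∧ -1 < p.2} = {q : ℝ × ℝ | q.1 < 0 ∧ -q.1 ^ 2 < q.2} ∧
    F '' {p : ℝ × ℝ | p.1 < 0 ∧ p.2 < -1} = {q : ℝ × ℝ | q.1 < 0 ∧ -q.1 ^ 2 < q.2} := by
  have hF' : F = fun p => (p.1, p.1 ^ 2 * (fun y : ℝ => y * (y + 2)) p.2) :=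
    funext fun p => by rw [hF, mul_assoc]
  have h0 : (0 : ℝ) ∉ Iio 0 := self_notMem_Iio
  have hU₃ := image_prod_fst_sq_mul_eq h0 Real.image_mul_add_two_Ioi
  have hU₄ := image_prod_fst_sq_mul_eq h0 Real.image_mul_add_two_Iio
  simp only [neg_one_mul] at hU₃ hU₄
  rw [hF']
  exact ⟨hU₃, hU₄⟩
end
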